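/- arXiv:0709.3648 — 5 statements merged into one kernel-verified Lean document; each statement's English description precedes it below -/
import Mathlib

section
/- Let h, q be positive integers and W the weight defined by W(a) = 2h − 3|a| for |a| ≤ h, W(a) = |a| − 2h for h ≤ |a| ≤ 2h, W(a) = 0 otherwise. Then the sum of W(a) over all integers a divisible by q equals q·({2h/q}² − 4{h/q}² − 4{2h/q}·0 − {2h/q} + 4{h/q}), which simplifies to 2q·‖h/q‖, where ‖x‖ denotes the distance from x to the nearest integer. -/
/-!
Writing `T_c(a) = max (c - |a|) 0` for the tent of height and half-width `c`, the weight is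
`W = 4 T_h - T_{2h}`. Summing a tent over the multiples of `q` is elementary: with `x = c / q`,
`∑ₖ T_c(qk) = q (x² + {x} - {x}²)`. The quadratic terms `4 (h/q)²` and `(2h/q)²` cancel, leaving
`q (4{x} - 4{x}² - {2x} + {2x}²)` with `x = h/q`, and comparing `{2x}` with `2{x}` in the two
cases `{x} < 1/2` and `{x} ≥ 1/2` shows this is `2 q ‖x‖`.
-/

open Finset

/-- The weight function W of the paper. -/
def Wwt (h : ℕ) (a : ℤ) : ℤ :=
  if |a| ≤ (h : ℤ) then 2*h - 3*|a| else if |a| ≤ 2*(h:ℤ) then |a| - 2*h else 0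

/-- Distance from a real number to the nearest integer. -/
noncomputable def distInt (x : ℝ) : ℝ := ⨅ n : ℤ, |x - (n : ℝ)|

lemma Wwt_eq_tent_sub_tent (h : ℕ) (a : ℤ) :
    Wwt h a = 4 * max ((h : ℤ) - |a|) 0 - max (2 * (h : ℤ) - |a|) 0 := by
  have := abs_nonneg a
  unfold Wwt
  split_ifs <;> omega

lemma tsum_ite_dvd_eq_tsum_mul {M : Type*} [AddCommMonoid M] [TopologicalSpace M]
    (f : ℤ → M) {q : ℤ} (hq : q ≠ 0) :
    ∑' a : ℤ, (if q ∣ a then f a else 0) = ∑' k : ℤ, f (q * k) := by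
  have hsupp : (Function.support fun a ↦ if q ∣ a then f a else 0) ⊆ Set.range (q * ·) := by
    intro a ha
    obtain ⟨k, rfl⟩ : q ∣ a := by by_contra hqa; simp [hqa] at ha
    exact ⟨k, rfl⟩
  rw [← (mul_right_injective₀ hq).tsum_eq hsupp]
  simp

lemma sum_range_sub_mul (c q : ℝ) (m : ℕ) :
    ∑ n ∈ range (m + 1), (c - q * n) = (m + 1) * c - q * m * (m + 1) / 2 := by
  induction m with
  | zero => simp
  | succ m ih => rw [sum_range_succ, ih]; push_cast; ring

section Tent

variable {c q : ℝ}

lemma hasSum_nat_tent (hc : 0 ≤ c) (hq : 0 < q) :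
    HasSum (fun n : ℕ ↦ max (c - q * n) 0)
      ((⌊c / q⌋₊ + 1) * c - q * ⌊c / q⌋₊ * (⌊c / q⌋₊ + 1) / 2) := by
  set m := ⌊c / q⌋₊
  have hbeyond : ∀ n ∉ range (m + 1), max (c - q * n) 0 = 0 := by
    intro n hn
    have : (m : ℝ) + 1 ≤ n := by exact_mod_cast not_lt.mp (mem_range.not.mp hn)
    have : c < q * n := by
      rw [← div_lt_iff₀' hq]
      linarith [Nat.lt_floor_add_one (c / q)]
    exact max_eq_right (by linarith)
  have hwithin : ∀ n ∈ range (m + 1), max (c - q * n) 0 = c - q * n := by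
    intro n hn
    have : (n : ℝ) ≤ m := by exact_mod_cast Nat.lt_succ_iff.mp (mem_range.mp hn)
    have : q * n ≤ c := by
      rw [← le_div_iff₀' hq]
      linarith [Nat.floor_le (div_nonneg hc hq.le)]
    exact max_eq_left (sub_nonneg.mpr this)
  rw [← sum_range_sub_mul, ← sum_congr rfl hwithin]
  exact hasSum_sum_of_ne_finset_zero hbeyond

lemma hasSum_tent (hc : 0 ≤ c) (hq : 0 < q) :
    HasSum (fun k : ℤ ↦ max (c - q * |(k : ℝ)|) 0)
      (q * ((c / q) ^ 2 + Int.fract (c / q) - Int.fract (c / q) ^ 2)) := by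
  have hnat := hasSum_nat_tent hc hq
  set m := ⌊c / q⌋₊
  set S := (m + 1) * c - q * m * (m + 1) / 2
  have hnonneg : HasSum (fun n : ℕ ↦ max (c - q * |((n : ℤ) : ℝ)|) 0) S := by
    simpa using hnat
  have hneg : HasSum (fun n : ℕ ↦ max (c - q * |((-(n + 1) : ℤ) : ℝ)|) 0) (S - c) := by
    have hshift : (fun n : ℕ ↦ max (c - q * |((-(n + 1) : ℤ) : ℝ)|) 0)
        = fun n ↦ max (c - q * ((n + 1 : ℕ) : ℝ)) 0 := by
      ext n
      push_cast
      rw [abs_neg, abs_of_nonneg (by positivity)]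
    have hzero : S - c = S - ∑ n ∈ range 1, max (c - q * n) 0 := by simp [max_eq_left hc]
    rw [hshift, hzero]
    exact (hasSum_nat_add_iff' 1).mpr hnat
  have hfract : Int.fract (c / q) = c / q - m := by
    rw [← Int.self_sub_floor, ← Int.natCast_floor_eq_floor (div_nonneg hc hq.le),
      Int.cast_natCast]
  rw [hfract, show q * ((c / q) ^ 2 + (c / q - m) - (c / q - m) ^ 2) = S + (S - c) by
    simp only [S]; field_simp; ring]
  exact hnonneg.of_nat_of_neg_add_one (f := fun k : ℤ ↦ max (c - q * |(k : ℝ)|) 0) hneg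

end Tent

lemma distInt_eq_abs_sub_round (x : ℝ) : distInt x = |x - round x| := by
  have hbdd : BddBelow (Set.range fun n : ℤ ↦ |x - n|) := ⟨0, by rintro _ ⟨n, rfl⟩; positivity⟩
  exact le_antisymm (ciInf_le hbdd (round x)) (le_ciInf (round_le x))

lemma two_mul_distInt_eq_fract (x : ℝ) :
    2 * distInt x
      = 4 * Int.fract x - 4 * Int.fract x ^ 2 - Int.fract (2 * x) + Int.fract (2 * x) ^ 2 := by
  rw [distInt_eq_abs_sub_round, abs_sub_round_eq_min]
  have hfloor := Int.floor_add_fract x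
  have h0 := Int.fract_nonneg x
  have h1 := Int.fract_lt_one x
  rcases lt_or_ge (Int.fract x) (1 / 2) with hlt | hge
  · have h2 : Int.fract (2 * x) = 2 * Int.fract x :=
      Int.fract_eq_iff.mpr ⟨by linarith, by linarith, 2 * ⌊x⌋, by push_cast; linarith⟩
    rw [min_eq_left (by linarith), h2]
    ring
  · have h2 : Int.fract (2 * x) = 2 * Int.fract x - 1 :=
      Int.fract_eq_iff.mpr ⟨by linarith, by linarith, 2 * ⌊x⌋ + 1, by push_cast; linarith⟩
    rw [min_eq_right (by linarith), h2]
    ring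

theorem sum_W_multiples_general (h q : ℕ) (hq : 0 < q) :
    (∑' a : ℤ, (if (q : ℤ) ∣ a then (Wwt h a : ℝ) else 0))
      = (q : ℝ) * (Int.fract ((2*h : ℝ)/q)^2 - 4 * Int.fract ((h : ℝ)/q)^2
          - Int.fract ((2*h : ℝ)/q) + 4 * Int.fract ((h : ℝ)/q)) ∧
    (∑' a : ℤ, (if (q : ℤ) ∣ a then (Wwt h a : ℝ) else 0))
      = 2 * (q : ℝ) * distInt ((h : ℝ)/q) := by
  have hqR : (0 : ℝ) < q := by exact_mod_cast hq
  have hW : ∀ k : ℤ, (Wwt h (q * k) : ℝ)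
      = 4 * max (h - q * |(k : ℝ)|) 0 - max (2 * h - q * |(k : ℝ)|) 0 := by
    intro k
    rw [Wwt_eq_tent_sub_tent]
    push_cast
    rw [abs_mul, Nat.abs_cast]
  have hsum := ((hasSum_tent (Nat.cast_nonneg h) hqR).mul_left 4).sub
    (hasSum_tent (by positivity : (0 : ℝ) ≤ 2 * h) hqR)
  have htsum : (∑' a : ℤ, (if (q : ℤ) ∣ a then (Wwt h a : ℝ) else 0))
      = (q : ℝ) * (Int.fract ((2*h : ℝ)/q)^2 - 4 * Int.fract ((h : ℝ)/q)^2
          - Int.fract ((2*h : ℝ)/q) + 4 * Int.fract ((h : ℝ)/q)) := by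
    rw [tsum_ite_dvd_eq_tsum_mul _ (by exact_mod_cast hq.ne'), funext hW, hsum.tsum_eq]
    ring
  refine ⟨htsum, ?_⟩
  rw [htsum, mul_div_assoc]
  linear_combination -(q : ℝ) * two_mul_distInt_eq_fract (h / q)

theorem sum_W_multiples (h q : ℕ) (hh : 0 < h) (hq : 0 < q) :
    (∑' a : ℤ, (if (q : ℤ) ∣ a then (Wwt h a : ℝ) else 0))
      = (q : ℝ) * (Int.fract ((2*h : ℝ)/q)^2 - 4 * Int.fract ((h : ℝ)/q)^2
          - Int.fract ((2*h : ℝ)/q) + 4 * Int.fract ((h : ℝ)/q)) ∧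
    (∑' a : ℤ, (if (q : ℤ) ∣ a then (Wwt h a : ℝ) else 0))
      = 2 * (q : ℝ) * distInt ((h : ℝ)/q) :=
  sum_W_multiples_general h q hq
end

section
/- Let h be a positive integer, β a real number with sin(πβ) ≠ 0, and W the weight defined by W(a) = 2h − 3|a| for |a| ≤ h, W(a) = |a| − 2h for h ≤ |a| ≤ 2h, W(a) = 0 otherwise. Then the sum over integers a with |a| ≤ 2h of W(a)·e(aβ) equals 4 sin⁴(πhβ)/sin²(πβ), where e(θ) = exp(2πiθ). -/
/-!
Write `d` for the sequence that is `-1` on `[0, h)`, `+1` on `[h, 2h)` and `0` elsewhere. Then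
`W(a) = ∑ₙ d(n) d(n + a)` is the autocorrelation of `d`, so for `z ≠ 0`
`∑ₐ W(a) zᵃ = D(z⁻¹) D(z)` with `D(z) = ∑ₖ d(k) zᵏ = (zʰ - 1)(1 + z + ⋯ + zʰ⁻¹)`.
For `z = e(β)` on the unit circle `z⁻¹ = z̄`, so the sum is `|D(z)|² = |zʰ - 1|⁴ / |z - 1|²`,
and `|e(θ) - 1| = 2 |sin πθ|`.
-/

open Finset Complex ComplexConjugate

theorem sum_autocorrelation_mul_zpow {K : Type*} [Field K] (d : ℤ → K) {S T : Finset ℤ}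
    (hd : ∀ k, d k ≠ 0 → k ∈ S) (hST : ∀ n ∈ S, ∀ k ∈ S, k - n ∈ T) {z : K} (hz : z ≠ 0) :
    ∑ a ∈ T, (∑ n ∈ S, d n * d (n + a)) * z ^ a
      = (∑ n ∈ S, d n * z ^ (-n)) * ∑ k ∈ S, d k * z ^ k := by
  have shift : ∀ n ∈ S, ∑ a ∈ T, d (n + a) * z ^ a = ∑ k ∈ S, d k * z ^ (k - n) := by
    intro n hn
    rw [← sum_subset (s₁ := S.image (· - n)), sum_image fun _ _ _ _ => sub_left_inj.1]
    · simp only [add_sub_cancel]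
    · simpa only [subset_iff, mem_image, forall_exists_index, and_imp,
        forall_apply_eq_imp_iff₂] using fun k hk => hST n hn k hk
    · intro a _ ha
      have : d (n + a) = 0 := by
        by_contra hne
        exact ha (mem_image.2 ⟨n + a, hd _ hne, add_sub_cancel_left n a⟩)
      rw [this, zero_mul]
  calc ∑ a ∈ T, (∑ n ∈ S, d n * d (n + a)) * z ^ a
      = ∑ n ∈ S, d n * ∑ a ∈ T, d (n + a) * z ^ a := by
        simp only [sum_mul, mul_sum, mul_assoc]
        exact sum_comm
    _ = ∑ n ∈ S, d n * z ^ (-n) * ∑ k ∈ S, d k * z ^ k := by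
        refine sum_congr rfl fun n hn => ?_
        simp only [shift n hn, mul_sum, mul_assoc, mul_left_comm (z ^ (-n)),
          ← zpow_add₀ hz, neg_add_eq_sub]
    _ = _ := (sum_mul ..).symm

def blockSign (h : ℕ) (k : ℤ) : ℤ :=
  if 0 ≤ k ∧ k < 2 * (h : ℤ) then (if k < h then -1 else 1) else 0

lemma blockSign_reflect (h : ℕ) (k : ℤ) : blockSign h (2 * h - 1 - k) = -blockSign h k := by
  unfold blockSign; split_ifs <;> omega

lemma nonneg_and_lt_of_blockSign_ne_zero {h : ℕ} {k : ℤ} (hk : blockSign h k ≠ 0) :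
    0 ≤ k ∧ k < 2 * h := by
  unfold blockSign at hk
  split_ifs at hk with H
  exacts [H, H, absurd rfl hk]

lemma Wwt_eq_sum_blockSign_mul_of_nonneg (h : ℕ) {a : ℤ} (ha : 0 ≤ a) :
    Wwt h a = ∑ n ∈ range (2 * h), blockSign h n * blockSign h (n + a) := by
  set f : ℕ → ℤ := fun n => blockSign h n * blockSign h (n + a)
  obtain ⟨b, rfl⟩ := Int.eq_ofNat_of_zero_le ha
  rw [range_eq_Ico]
  simp only [Wwt, abs_of_nonneg ha]
  have piece : ∀ {l u : ℕ} {c : ℤ},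
      (∀ n : ℕ, l ≤ n → n < u → blockSign h n * blockSign h (n + b) = c) →
      ∑ n ∈ Ico l u, f n = (u - l : ℕ) * c := by
    intro l u c hf
    rw [sum_eq_card_nsmul fun n hn => hf n (mem_Ico.1 hn).1 (mem_Ico.1 hn).2, Nat.card_Ico,
      nsmul_eq_mul]
  obtain hbh | hbh2 | hb2 : b ≤ h ∨ h < b ∧ b ≤ 2 * h ∨ 2 * h < b := by omega
  · rw [← sum_Ico_consecutive f (show 0 ≤ h - b by omega) (show h - b ≤ 2 * h by omega),
      ← sum_Ico_consecutive f (show h - b ≤ h by omega) (show h ≤ 2 * h by omega),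
      ← sum_Ico_consecutive f (show h ≤ 2 * h - b by omega) (show 2 * h - b ≤ 2 * h by omega),
      piece (c := 1), piece (c := -1), piece (c := 1), piece (c := 0)]
    · split_ifs <;> omega
    all_goals intro n _ _; unfold blockSign; split_ifs <;> omega
  · rw [← sum_Ico_consecutive f (show 0 ≤ 2 * h - b by omega) (show 2 * h - b ≤ 2 * h by omega),
      ← sum_Ico_consecutive f (show 2 * h - b ≤ h by omega) (show h ≤ 2 * h by omega),
      piece (c := -1), piece (c := 0), piece (c := 0)]
    · split_ifs <;> omega
    all_goals intro n _ _; unfold blockSign; split_ifs <;> omega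
  · rw [piece (c := 0)]
    · split_ifs <;> omega
    intro n _ _; unfold blockSign; split_ifs <;> omega

lemma Wwt_neg (h : ℕ) (a : ℤ) : Wwt h (-a) = Wwt h a := by
  simp only [Wwt, abs_neg]

lemma Wwt_eq_sum_blockSign_mul (h : ℕ) (a : ℤ) :
    Wwt h a = ∑ n ∈ range (2 * h), blockSign h n * blockSign h (n + a) := by
  rcases le_or_gt 0 a with ha | ha
  · exact Wwt_eq_sum_blockSign_mul_of_nonneg h ha
  rw [← Wwt_neg, Wwt_eq_sum_blockSign_mul_of_nonneg h (neg_nonneg.2 ha.le),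
    ← sum_range_reflect]
  refine sum_congr rfl fun n hn => ?_
  have hcast : ((2 * h - 1 - n : ℕ) : ℤ) = 2 * h - 1 - n := by
    have := mem_range.1 hn; omega
  rw [hcast, blockSign_reflect, show 2 * h - 1 - n + -a = 2 * (h : ℤ) - 1 - (n + a) by ring,
    blockSign_reflect, neg_mul_neg]

lemma sum_blockSign_mul_pow {R : Type*} [CommRing R] (h : ℕ) (z : R) :
    ∑ k ∈ range (2 * h), (blockSign h k : R) * z ^ k = (z ^ h - 1) * ∑ k ∈ range h, z ^ k := by
  rw [two_mul, sum_range_add, sub_mul, one_mul, mul_sum, sub_eq_neg_add, ← sum_neg_distrib]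
  congr 1 <;> refine sum_congr rfl fun k hk => ?_ <;> have := mem_range.1 hk
  · rw [blockSign, if_pos (by omega), if_pos (by omega)]; simp
  · rw [blockSign, if_pos (by omega), if_neg (by omega), pow_add]; simp

theorem sum_Wwt_mul_zpow {K : Type*} [Field K] (h : ℕ) {z : K} (hz : z ≠ 0) :
    ∑ a ∈ Icc (-(2 * h : ℤ)) (2 * h), (Wwt h a : K) * z ^ a
      = ((z⁻¹ ^ h - 1) * ∑ k ∈ range h, z⁻¹ ^ k) * ((z ^ h - 1) * ∑ k ∈ range h, z ^ k) := by
  have key := sum_autocorrelation_mul_zpow (fun k => (blockSign h k : K))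
    (S := (range (2 * h)).map Nat.castEmbedding) (T := Icc (-(2 * h : ℤ)) (2 * h)) ?_ ?_ hz
  · simp only [sum_map, Nat.castEmbedding_apply, zpow_neg, ← inv_zpow, zpow_natCast] at key
    simp only [Wwt_eq_sum_blockSign_mul, ← sum_blockSign_mul_pow]
    push_cast
    exact key
  · intro k hk
    have := nonneg_and_lt_of_blockSign_ne_zero fun h0 => hk (by rw [h0, Int.cast_zero])
    simp only [mem_map, mem_range, Nat.castEmbedding_apply]
    exact ⟨k.toNat, by omega, by omega⟩
  · simp only [mem_map, mem_range, Nat.castEmbedding_apply, mem_Icc]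
    rintro _ ⟨n, hn, rfl⟩ _ ⟨k, hk, rfl⟩
    omega

lemma norm_sub_one_mul_norm_pow_sub_one_mul_geom_sum {𝕜 : Type*} [NormedField 𝕜] (x : 𝕜)
    (n : ℕ) : ‖x - 1‖ * ‖(x ^ n - 1) * ∑ i ∈ range n, x ^ i‖ = ‖x ^ n - 1‖ ^ 2 := by
  rw [norm_mul, mul_left_comm, ← norm_mul, mul_geom_sum, sq]

theorem sum_Wwt_mul_zpow_of_norm_eq_one (h : ℕ) {z : ℂ} (hz : ‖z‖ = 1) :
    ∑ a ∈ Icc (-(2 * h : ℤ)) (2 * h), (Wwt h a : ℂ) * z ^ a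
      = ((‖(z ^ h - 1) * ∑ k ∈ range h, z ^ k‖ ^ 2 : ℝ) : ℂ) := by
  rw [sum_Wwt_mul_zpow h (norm_ne_zero_iff.1 (hz ▸ one_ne_zero)), inv_eq_conj hz, ofReal_pow,
    ← conj_mul']
  simp only [map_mul, map_sub, map_pow, map_one, map_sum]

open Real in
lemma norm_exp_two_pi_I_mul_sub_one (θ : ℝ) :
    ‖exp (2 * π * I * θ) - 1‖ = 2 * |Real.sin (π * θ)| := by
  have := norm_exp_I_mul_ofReal_sub_one (2 * π * θ)
  rw [show 2 * π * θ / 2 = π * θ by ring, norm_mul, Real.norm_two, Real.norm_eq_abs] at this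
  rw [← this]
  push_cast
  ring_nf

open Real in
theorem sum_W_exp_general (h : ℕ) (β : ℝ) (hβ : Real.sin (π * β) ≠ 0) :
    ∑ a ∈ Finset.Icc (-(2*(h:ℤ))) (2*(h:ℤ)),
        (Wwt h a : ℂ) * Complex.exp (2 * π * Complex.I * (a : ℂ) * (β : ℂ))
      = ((4 * Real.sin (π * h * β)^4 / Real.sin (π * β)^2 : ℝ) : ℂ) := by
  have hz : ‖exp (2 * π * I * β)‖ = 1 := by
    rw [show 2 * π * I * β = (2 * π * β : ℝ) * I by push_cast; ring]
    exact norm_exp_ofReal_mul_I _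
  set z := exp (2 * π * I * β)
  have hpow (a : ℤ) : exp (2 * π * I * a * β) = z ^ a := by
    rw [← exp_int_mul]; ring_nf
  have hz1 : ‖z - 1‖ = 2 * |Real.sin (π * β)| := norm_exp_two_pi_I_mul_sub_one β
  have hzh1 : ‖z ^ h - 1‖ = 2 * |Real.sin (π * h * β)| := by
    rw [← zpow_natCast, ← hpow, show 2 * π * I * (h : ℤ) * β = 2 * π * I * (h * β : ℝ) by
      push_cast; ring, norm_exp_two_pi_I_mul_sub_one, mul_assoc]
  have hD := norm_sub_one_mul_norm_pow_sub_one_mul_geom_sum z h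
  rw [hz1, hzh1] at hD
  simp only [hpow]
  rw [sum_Wwt_mul_zpow_of_norm_eq_one h hz, ofReal_inj, eq_div_iff (pow_ne_zero 2 hβ)]
  generalize ‖(z ^ h - 1) * ∑ k ∈ range h, z ^ k‖ = N at hD ⊢
  have := congrArg (· ^ 2) hD
  simp only [mul_pow, sq_abs, ← pow_mul] at this
  linear_combination this / 4

open Real in
theorem sum_W_exp (h : ℕ) (hh : 0 < h) (β : ℝ) (hβ : Real.sin (π * β) ≠ 0) :
    ∑ a ∈ Finset.Icc (-(2*(h:ℤ))) (2*(h:ℤ)),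
        (Wwt h a : ℂ) * Complex.exp (2 * π * Complex.I * (a : ℂ) * (β : ℂ))
      = ((4 * Real.sin (π * h * β)^4 / Real.sin (π * β)^2 : ℝ) : ℂ) :=
  sum_W_exp_general h β hβ
end

section
/- With W as above (h a positive integer), for every positive integer ℓ and every real α, the sum over all integers b of W(ℓb)·e(bα) is a nonnegative real number. -/
open Finset ComplexConjugate

theorem sum_sum_ite_eq_sum_normSq_fiber {ι κ : Type*} [DecidableEq κ] (s : Finset ι)
    (π : ι → κ) (x : ι → ℂ) :
    ∑ m ∈ s, ∑ n ∈ s, (if π m = π n then x m * conj (x n) else 0) =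
      ((∑ r ∈ s.image π, Complex.normSq (∑ m ∈ s with π m = r, x m) : ℝ) : ℂ) := by
  push_cast
  simp_rw [← Complex.mul_conj, map_sum, sum_mul]
  calc ∑ m ∈ s, ∑ n ∈ s, (if π m = π n then x m * conj (x n) else 0)
      = ∑ m ∈ s, x m * ∑ n ∈ s with π n = π m, conj (x n) := by
        simp_rw [sum_filter, mul_sum, mul_ite, mul_zero, eq_comm]
    _ = _ := by
        rw [← sum_fiberwise_of_maps_to (fun m hm => mem_image_of_mem π hm)]
        refine sum_congr rfl fun r _ => sum_congr rfl fun m hm => ?_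
        rw [(mem_filter.mp hm).2]

def autocorr (s : Finset ℤ) (c : ℤ → ℤ) (a : ℤ) : ℤ :=
  ∑ m ∈ s, ∑ n ∈ s, if m - n = a then c m * c n else 0

theorem hasSum_ite_sub_eq_mul {ℓ : ℕ} (hℓ : 0 < ℓ) (m n : ℤ) (x : ℂ) :
    HasSum (fun b : ℤ => if m - n = ℓ * b then x else 0)
      (if (ℓ : ℤ) ∣ m - n then x else 0) := by
  split_ifs with hdvd
  · obtain ⟨k, hk⟩ := hdvd
    convert hasSum_ite_eq k x using 2 with b
    refine if_congr ?_ rfl rfl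
    rw [hk, mul_right_inj' (by positivity), eq_comm]
  · convert hasSum_zero with b
    rw [if_neg fun h => hdvd ⟨b, h⟩]

theorem hasSum_autocorr_mul_zpow {ℓ : ℕ} (hℓ : 0 < ℓ) (s : Finset ℤ) (c : ℤ → ℤ) {z : ℂ}
    (hz : ‖z‖ = 1) :
    HasSum (fun b : ℤ => (autocorr s c (ℓ * b) : ℂ) * z ^ (ℓ * b))
      ((∑ r ∈ s.image (· % (ℓ : ℤ)),
        Complex.normSq (∑ m ∈ s with m % (ℓ : ℤ) = r, (c m : ℂ) * z ^ m) : ℝ) : ℂ) := by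
  have hz0 : z ≠ 0 := by rintro rfl; simp at hz
  have hterm (b : ℤ) : (autocorr s c (ℓ * b) : ℂ) * z ^ (ℓ * b) =
      ∑ m ∈ s, ∑ n ∈ s, if m - n = ℓ * b then (c m * c n : ℂ) * z ^ (m - n) else 0 := by
    simp only [autocorr, Int.cast_sum, sum_mul]
    refine sum_congr rfl fun m _ => sum_congr rfl fun n _ => ?_
    split_ifs with h <;> simp [h]
  rw [funext hterm, ← sum_sum_ite_eq_sum_normSq_fiber]
  refine hasSum_sum fun m _ => hasSum_sum fun n _ => ?_
  convert hasSum_ite_sub_eq_mul hℓ m n _ using 1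
  refine if_congr ?_ ?_ rfl
  · rw [← Int.modEq_iff_dvd, Int.ModEq, eq_comm]
  · rw [zpow_sub₀ hz0, div_eq_mul_inv, Complex.inv_eq_conj (by rw [norm_zpow, hz, one_zpow])]
    simp only [map_mul, map_intCast]
    ring

theorem sum_Ico_sum_Ico_ite_sub_eq (p q a : ℤ) (H : ℕ) :
    ∑ m ∈ Ico p (p + H), ∑ n ∈ Ico q (q + H), (if m - n = a then (1 : ℤ) else 0) =
      max (H - |a - (p - q)|) 0 := by
  have hfilter : {m ∈ Ico p (p + H) | m - a ∈ Ico q (q + H)} =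
      Ico (max p (q + a)) (min (p + H) (q + H + a)) := by
    ext m
    simp only [mem_filter, mem_Ico]
    omega
  simp_rw [show ∀ m n : ℤ, (m - n = a ↔ n = m - a) from fun m n => by omega, sum_ite_eq',
    sum_boole, hfilter, Int.card_Ico]
  rcases abs_cases (a - (p - q)) with ⟨habs, _⟩ | ⟨habs, _⟩ <;> rw [habs] <;> omega

theorem Wwt_eq_triangle (h : ℕ) (a : ℤ) :
    Wwt h a = 2 * max (h - |a|) 0 - max (h - |a - h|) 0 - max (h - |a + h|) 0 := by
  rw [Wwt]
  rcases abs_cases a with ⟨h1, _⟩ | ⟨h1, _⟩ <;>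
  rcases abs_cases (a - h) with ⟨h2, _⟩ | ⟨h2, _⟩ <;>
  rcases abs_cases (a + h) with ⟨h3, _⟩ | ⟨h3, _⟩ <;>
  simp only [h1, h2, h3] <;> split_ifs <;> omega

def signBlock (h : ℕ) (n : ℤ) : ℤ := if n < h then 1 else -1

theorem autocorr_signBlock (h : ℕ) (a : ℤ) :
    autocorr (Ico 0 (2 * h)) (signBlock h) a =
      2 * max (h - |a|) 0 - max (h - |a - h|) 0 - max (h - |a + h|) 0 := by
  have hsplit : Ico (0 : ℤ) (2 * h) = Ico 0 (0 + (h : ℤ)) ∪ Ico (h : ℤ) (h + h) := by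
    rw [zero_add, Ico_union_Ico_eq_Ico (by positivity) (by omega), two_mul]
  have hdisj : Disjoint (Ico 0 (0 + (h : ℤ))) (Ico (h : ℤ) (h + h)) := by
    rw [zero_add]; exact Ico_disjoint_Ico_consecutive _ _ _
  have hlo : ∀ m ∈ Ico 0 (0 + (h : ℤ)), signBlock h m = 1 := fun m hm => by
    rw [signBlock, if_pos (by simp only [mem_Ico] at hm; omega)]
  have hhi : ∀ m ∈ Ico (h : ℤ) (h + h), signBlock h m = -1 := fun m hm => by
    rw [signBlock, if_neg (by simp only [mem_Ico] at hm; omega)]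
  have hblock (A B : Finset ℤ) (ε : ℤ)
      (hε : ∀ m ∈ A, ∀ n ∈ B, signBlock h m * signBlock h n = ε) :
      ∑ m ∈ A, ∑ n ∈ B, (if m - n = a then signBlock h m * signBlock h n else 0) =
        ε * ∑ m ∈ A, ∑ n ∈ B, (if m - n = a then 1 else 0) := by
    simp_rw [mul_sum, mul_ite, mul_one, mul_zero]
    exact sum_congr rfl fun m hm => sum_congr rfl fun n hn => by rw [hε m hm n hn]
  simp only [autocorr, hsplit, sum_union hdisj, sum_add_distrib]
  rw [hblock _ _ 1 ?_, hblock _ _ (-1) ?_, hblock _ _ (-1) ?_, hblock _ _ 1 ?_]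
  · rw [sum_Ico_sum_Ico_ite_sub_eq, sum_Ico_sum_Ico_ite_sub_eq, sum_Ico_sum_Ico_ite_sub_eq,
      sum_Ico_sum_Ico_ite_sub_eq]
    simp only [sub_self, sub_zero, zero_sub, sub_neg_eq_add]
    ring
  · exact fun m hm n hn => by rw [hhi m hm, hhi n hn]; rfl
  · exact fun m hm n hn => by rw [hhi m hm, hlo n hn]; rfl
  · exact fun m hm n hn => by rw [hlo m hm, hhi n hn]; rfl
  · exact fun m hm n hn => by rw [hlo m hm, hlo n hn]; rfl

open Real in
theorem sum_W_dilated_nonneg_general (h ℓ : ℕ) (hℓ : 0 < ℓ) (α : ℝ) :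
    ∃ r : ℝ, 0 ≤ r ∧
      (∑' b : ℤ, (Wwt h ((ℓ : ℤ) * b) : ℂ) *
          Complex.exp (2 * π * Complex.I * (b : ℂ) * (α : ℂ))) = (r : ℂ) := by
  set z : ℂ := Complex.exp (((2 * π * α / ℓ : ℝ) : ℂ) * Complex.I)
  have hz : ‖z‖ = 1 := Complex.norm_exp_ofReal_mul_I _
  have hterm (b : ℤ) : (Wwt h ((ℓ : ℤ) * b) : ℂ) *
      Complex.exp (2 * π * Complex.I * (b : ℂ) * (α : ℂ)) =
        (autocorr (Ico 0 (2 * h)) (signBlock h) (ℓ * b) : ℂ) * z ^ ((ℓ : ℤ) * b) := by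
    rw [Wwt_eq_triangle, ← autocorr_signBlock, ← Complex.exp_int_mul]
    congr 2
    have hℓ0 : (ℓ : ℂ) ≠ 0 := by exact_mod_cast hℓ.ne'
    push_cast
    field_simp
  rw [funext hterm, (hasSum_autocorr_mul_zpow hℓ _ _ hz).tsum_eq]
  exact ⟨_, sum_nonneg fun r _ => Complex.normSq_nonneg _, rfl⟩

open Real in
theorem sum_W_dilated_nonneg (h ℓ : ℕ) (hh : 0 < h) (hℓ : 0 < ℓ) (α : ℝ) :
    ∃ r : ℝ, 0 ≤ r ∧
      (∑' b : ℤ, (Wwt h ((ℓ : ℤ) * b) : ℂ) *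
          Complex.exp (2 * π * Complex.I * (b : ℂ) * (α : ℂ))) = (r : ℂ) :=
  sum_W_dilated_nonneg_general h ℓ hℓ α
end

section
/- Let f = g ∗ 1 (Dirichlet convolution with the constant function 1), where g: ℕ → ℝ vanishes for arguments greater than Q. Then for every nonzero integer a, the correlation C_f(a) = ∑_{N < n ≤ 2N} f(n)f(n−a) equals ∑_{ℓ | a} ∑∑_{(d,q)=1} g(ℓd)g(ℓq) · #{m : N/(ℓd) < m ≤ 2N/(ℓd), m·d ≡ a/ℓ (mod q)}. -/
/-!
Expanding both factors as `f n = ∑_{D ≤ Q} g D · [D ∣ n]` turns the correlation into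
`∑_{D, E} g D g E · #{n : D ∣ n, E ∣ n - a}`. Such an `n` exists only if `ℓ = gcd D E` divides `a`;
writing `D = ℓ d`, `E = ℓ q` with `d, q` coprime and `n = ℓ d m`, the two divisibilities become the
single congruence `m d ≡ a / ℓ (mod q)`.
-/

/-- `f = g ∗ 1` extended to the integers: for `n ≠ 0` sum `g` over the (positive)
divisors of `|n|`; for `n = 0` every positive integer divides `n`, and since `g`
is supported in `[1, Q]` the value is `∑_{d ≤ Q} g d`. -/
noncomputable def sieveFn (Q : ℕ) (g : ℕ → ℝ) (n : ℤ) : ℝ :=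
  if n = 0 then ∑ d ∈ Finset.Icc 1 Q, g d else ∑ d ∈ n.natAbs.divisors, g d

open Finset

theorem sieveFn_eq_sum_Icc_ite_dvd {Q : ℕ} {g : ℕ → ℝ} (hg : ∀ q > Q, g q = 0) (n : ℤ) :
    sieveFn Q g n = ∑ D ∈ Icc 1 Q, if (D : ℤ) ∣ n then g D else 0 := by
  rw [sieveFn, ← sum_filter]
  split_ifs with hn
  · simp [hn]
  · refine sum_subset (fun D hD => ?_) (fun D hD hDQ => ?_) |>.symm
    · simp only [mem_filter, mem_Icc] at hD
      exact Nat.mem_divisors.mpr ⟨Int.natCast_dvd.mp hD.2, by simpa using hn⟩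
    · have hD0 := Nat.pos_of_mem_divisors hD
      have hDn : (D : ℤ) ∣ n := Int.natCast_dvd.mpr (Nat.dvd_of_mem_divisors hD)
      simp only [mem_filter, mem_Icc, hDn, and_true, not_and, not_le] at hDQ
      exact hg D (hDQ hD0)

theorem sum_sieveFn_mul_sieveFn_sub {Q : ℕ} {g : ℕ → ℝ} (hg : ∀ q > Q, g q = 0)
    (s : Finset ℤ) (a : ℤ) :
    ∑ n ∈ s, sieveFn Q g n * sieveFn Q g (n - a) =
      ∑ D ∈ Icc 1 Q, ∑ E ∈ Icc 1 Q,
        g D * g E * (#{n ∈ s | (D : ℤ) ∣ n ∧ (E : ℤ) ∣ n - a} : ℝ) := by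
  simp_rw [sieveFn_eq_sum_Icc_ite_dvd hg, sum_mul_sum, ite_zero_mul_ite_zero, sum_comm (s := s),
    ← sum_filter, sum_const, nsmul_eq_mul, mul_comm]

theorem natCast_gcd_dvd_of_dvd_of_dvd_sub {D E : ℕ} {n a : ℤ} (hD : (D : ℤ) ∣ n)
    (hE : (E : ℤ) ∣ n - a) : (D.gcd E : ℤ) ∣ a := by
  have h1 : (D.gcd E : ℤ) ∣ n := (Int.natCast_dvd_natCast.mpr (D.gcd_dvd_left E)).trans hD
  have h2 : (D.gcd E : ℤ) ∣ n - a := (Int.natCast_dvd_natCast.mpr (D.gcd_dvd_right E)).trans hE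
  simpa using dvd_sub h1 h2

theorem card_filter_Ioc_natCast_dvd {k : ℕ} (hk : 0 < k) (N M : ℕ) (P : ℤ → Prop)
    [DecidablePred P] :
    #{n ∈ Ioc (N : ℤ) M | (k : ℤ) ∣ n ∧ P n} = #{m ∈ Ioc (N / k) (M / k) | P (k * m : ℕ)} := by
  symm
  refine card_bij (fun m _ => (k * m : ℕ)) (fun m hm => ?_) (fun m _ m' _ h => ?_) (fun n hn => ?_)
  · simp only [mem_filter, mem_Ioc, Nat.div_lt_iff_lt_mul hk, Nat.le_div_iff_mul_le hk] at hm ⊢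
    refine ⟨⟨?_, ?_⟩, ⟨m, by push_cast; ring⟩, hm.2⟩
    · rw [Nat.cast_lt, mul_comm]; exact hm.1.1
    · rw [Nat.cast_le, mul_comm]; exact hm.1.2
  · exact Nat.eq_of_mul_eq_mul_left hk (by exact_mod_cast h)
  · simp only [mem_filter, mem_Ioc] at hn
    obtain ⟨⟨hNn, hnM⟩, ⟨c, rfl⟩, hP⟩ := hn
    lift c to ℕ using (pos_of_mul_pos_right (by omega) (Int.natCast_nonneg k)).le
    refine ⟨c, ?_, by push_cast; rfl⟩
    simp only [mem_filter, mem_Ioc, Nat.div_lt_iff_lt_mul hk, Nat.le_div_iff_mul_le hk]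
    exact ⟨⟨by rw [mul_comm]; exact_mod_cast hNn, by rw [mul_comm]; exact_mod_cast hnM⟩, hP⟩

theorem natCast_mul_dvd_sub_iff_emod_eq {ℓ d q m : ℕ} {a : ℤ} (hℓ : ℓ ≠ 0) (hℓa : (ℓ : ℤ) ∣ a) :
    ((ℓ * q : ℕ) : ℤ) ∣ ((ℓ * d * m : ℕ) : ℤ) - a ↔ (m : ℤ) * d % q = a / ℓ % q := by
  obtain ⟨b, rfl⟩ := hℓa
  have hℓ' : (ℓ : ℤ) ≠ 0 := by exact_mod_cast hℓ
  rw [Int.mul_ediv_cancel_left _ hℓ', ← Int.ModEq, Int.modEq_iff_dvd, dvd_sub_comm]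
  push_cast
  rw [show (ℓ : ℤ) * b - ℓ * d * m = ℓ * (b - m * d) by ring, mul_dvd_mul_iff_left hℓ']

theorem sum_Icc_Icc_eq_sum_divisors_sum_coprime {M : Type*} [AddCommMonoid M] {Q A : ℕ}
    (hA : A ≠ 0) (F : ℕ → ℕ → M) (hF_le : ∀ D E, F D E ≠ 0 → D ≤ Q ∧ E ≤ Q)
    (hF_gcd : ∀ D E, F D E ≠ 0 → D.gcd E ∣ A) :
    ∑ D ∈ Icc 1 Q, ∑ E ∈ Icc 1 Q, F D E =
      ∑ ℓ ∈ A.divisors, ∑ d ∈ Icc 1 Q, ∑ q ∈ Icc 1 Q,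
        if d.Coprime q then F (ℓ * d) (ℓ * q) else 0 := by
  simp only [← sum_product']
  symm
  refine sum_bij_ne_zero (fun t _ _ => (t.1 * t.2.1, t.1 * t.2.2)) ?_ ?_ ?_ ?_
  · rintro ⟨ℓ, d, q⟩ ht hne
    obtain ⟨-, hF⟩ := ite_ne_right_iff.mp hne
    simp only [mem_product, mem_Icc, Nat.mem_divisors] at ht ⊢
    obtain ⟨hdQ, hqQ⟩ := hF_le _ _ hF
    have hℓ0 := Nat.pos_of_ne_zero (ne_zero_of_dvd_ne_zero hA ht.1.1)
    refine ⟨⟨?_, ?_⟩, ?_, ?_⟩ <;> nlinarith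
  · rintro ⟨ℓ, d, q⟩ ht hne ⟨ℓ', d', q'⟩ - hne' h
    have gcd_eq (ℓ d q : ℕ) (h : d.Coprime q) : (ℓ * d).gcd (ℓ * q) = ℓ := by
      rw [Nat.gcd_mul_left, h, mul_one]
    simp only [Prod.mk.injEq] at h ⊢
    have hℓ : ℓ = ℓ' := by
      rw [← gcd_eq ℓ d q (ite_ne_right_iff.mp hne).1, ← gcd_eq ℓ' d' q' (ite_ne_right_iff.mp hne').1,
        h.1, h.2]
    subst hℓ
    have hℓ0 : 0 < ℓ := Nat.pos_of_mem_divisors (mem_product.mp ht).1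
    exact ⟨rfl, Nat.eq_of_mul_eq_mul_left hℓ0 h.1, Nat.eq_of_mul_eq_mul_left hℓ0 h.2⟩
  · rintro ⟨D, E⟩ hDE hF
    simp only [mem_product, mem_Icc] at hDE
    have hℓ : 0 < D.gcd E := Nat.gcd_pos_of_pos_left _ hDE.1.1
    have hD : D.gcd E * (D / D.gcd E) = D := Nat.mul_div_cancel' (D.gcd_dvd_left E)
    have hE : D.gcd E * (E / D.gcd E) = E := Nat.mul_div_cancel' (D.gcd_dvd_right E)
    refine ⟨(D.gcd E, D / D.gcd E, E / D.gcd E), ?_, ?_, by simp only [hD, hE]⟩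
    · simp only [mem_product, mem_Icc, Nat.mem_divisors]
      exact ⟨⟨hF_gcd _ _ hF, hA⟩,
        ⟨Nat.div_pos (Nat.gcd_le_left E hDE.1.1) hℓ, (Nat.div_le_self _ _).trans hDE.1.2⟩,
        ⟨Nat.div_pos (Nat.gcd_le_right D hDE.2.1) hℓ, (Nat.div_le_self _ _).trans hDE.2.2⟩⟩
    · rwa [if_pos (Nat.coprime_div_gcd_div_gcd hℓ), hD, hE]
  · rintro ⟨ℓ, d, q⟩ - hne
    exact if_pos (ite_ne_right_iff.mp hne).1

theorem correlation_formula_general (N Q : ℕ)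
    (g : ℕ → ℝ) (hg : ∀ q > Q, g q = 0) (a : ℤ) (ha : a ≠ 0) :
    (∑ n ∈ Finset.Ioc (N:ℤ) (2*N), sieveFn Q g n * sieveFn Q g (n - a))
      = ∑ ℓ ∈ a.natAbs.divisors, ∑ d ∈ Finset.Icc 1 Q, ∑ q ∈ Finset.Icc 1 Q,
          if Nat.Coprime d q then
            g (ℓ*d) * g (ℓ*q) *
              (((Finset.Ioc (N/(ℓ*d)) (2*N/(ℓ*d))).filter
                  (fun m : ℕ => ((m : ℤ) * d) % q = (a / (ℓ:ℤ)) % q)).card : ℝ)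
          else 0 := by
  rw [show (2 * N : ℤ) = (2 * N : ℕ) by push_cast; rfl, sum_sieveFn_mul_sieveFn_sub hg,
    sum_Icc_Icc_eq_sum_divisors_sum_coprime (Int.natAbs_ne_zero.mpr ha)]
  · refine sum_congr rfl fun ℓ hℓ => sum_congr rfl fun d hd => sum_congr rfl fun q _ => ?_
    have hℓ0 : 0 < ℓ := Nat.pos_of_mem_divisors hℓ
    have hℓa : (ℓ : ℤ) ∣ a := Int.natCast_dvd.mpr (Nat.dvd_of_mem_divisors hℓ)
    rw [card_filter_Ioc_natCast_dvd (Nat.mul_pos hℓ0 (mem_Icc.mp hd).1)]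
    simp_rw [natCast_mul_dvd_sub_iff_emod_eq hℓ0.ne' hℓa]
  · intro D E hF
    have hgD : g D ≠ 0 := left_ne_zero_of_mul (left_ne_zero_of_mul hF)
    have hgE : g E ≠ 0 := right_ne_zero_of_mul (left_ne_zero_of_mul hF)
    exact ⟨not_lt.mp (hgD ∘ hg D), not_lt.mp (hgE ∘ hg E)⟩
  · intro D E hF
    obtain ⟨n, hn⟩ := card_ne_zero.mp (Nat.cast_ne_zero.mp (right_ne_zero_of_mul hF))
    obtain ⟨-, hD, hE⟩ := mem_filter.mp hn
    exact Int.natCast_dvd.mp (natCast_gcd_dvd_of_dvd_of_dvd_sub hD hE)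

theorem correlation_formula (N Q : ℕ) (hN : 0 < N) (hQ : 0 < Q)
    (g : ℕ → ℝ) (hg : ∀ q > Q, g q = 0) (a : ℤ) (ha : a ≠ 0) :
    (∑ n ∈ Finset.Ioc (N:ℤ) (2*N), sieveFn Q g n * sieveFn Q g (n - a))
      = ∑ ℓ ∈ a.natAbs.divisors, ∑ d ∈ Finset.Icc 1 Q, ∑ q ∈ Finset.Icc 1 Q,
          if Nat.Coprime d q then
            g (ℓ*d) * g (ℓ*q) *
              (((Finset.Ioc (N/(ℓ*d)) (2*N/(ℓ*d))).filter
                  (fun m : ℕ => ((m : ℤ) * d) % q = (a / (ℓ:ℤ)) % q)).card : ℝ)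
          else 0 :=
  correlation_formula_general N Q g hg a ha
end

section
/- Let q and h be positive integers, ℓ a positive integer, and K: ℤ → ℝ even, supported on [−2h, 2h], with |K(a)| ≤ 2h for all a. Then the divisor-flipped identity holds: 2q·∑_{1 ≤ j ≤ q/2} (1/j)·∑_{a: ja ≡ 0 (mod q)} K(aℓ) = 2·∑_{t | q, t > 1} t·∑_{j ≤ t/2, gcd(j,t)=1} (1/j)·∑_{a ≡ 0 (mod t)} K(aℓ), and this quantity is ≪_ε (qh + h²)·q^ε for every ε > 0. -/
/-!
Since `q / j = t / j'` for `t = q / gcd(j, q)` and `j' = j / gcd(j, q)`, and `q ∣ j a ↔ t ∣ a`,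
the identity is the reindexing `j ↦ (t, j')`, a bijection from `[1, q/2]` onto the pairs with
`1 < t ∣ q`, `j' ≤ t/2` and `gcd(j', t) = 1`. For the bound, the sum over multiples `a` of `t`
has at most `2 ⌊2h/t⌋ + 1` nonzero terms, each at most `2h`, so the term of `t` is
`≪ (h + q) h log q`; there are `d(q) ≪ q^(ε/2)` divisors and `log q ≪ q^(ε/2)`.
-/

open Real Finset

lemma add_one_le_mul_two_rpow {ε : ℝ} (hε : 0 < ε) (a : ℕ) :
    (a + 1 : ℝ) ≤ (1 + (ε * log 2)⁻¹) * 2 ^ (ε * a) := by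
  have hlog : 0 < ε * log 2 := mul_pos hε (log_pos one_lt_two)
  have hone : (1 : ℝ) ≤ 2 ^ (ε * a) := one_le_rpow one_le_two (by positivity)
  have hexp : ε * a * log 2 + 1 ≤ 2 ^ (ε * a) := by
    rw [rpow_def_of_pos two_pos, mul_comm (log 2)]
    exact add_one_le_exp _
  have ha : (a : ℝ) ≤ (ε * log 2)⁻¹ * 2 ^ (ε * a) := by
    rw [inv_mul_eq_div, le_div_iff₀ hlog]
    linarith
  linarith

lemma add_one_le_rpow_of_two_rpow_inv_le {ε p : ℝ} (hε : 0 < ε) (hp : 2 ^ ε⁻¹ ≤ p) (a : ℕ) :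
    (a + 1 : ℝ) ≤ p ^ (ε * a) := by
  have hp0 : 0 ≤ p := (rpow_pos_of_pos two_pos _).le.trans hp
  have htwo : 2 ≤ p ^ ε := by
    calc (2 : ℝ) = (2 ^ ε⁻¹) ^ ε := by rw [← rpow_mul zero_le_two, inv_mul_cancel₀ hε.ne', rpow_one]
      _ ≤ p ^ ε := rpow_le_rpow (by positivity) hp hε.le
  calc (a + 1 : ℝ) ≤ 2 ^ a := by exact_mod_cast a.lt_two_pow_self
    _ ≤ (p ^ ε) ^ a := pow_le_pow_left₀ zero_le_two htwo a
    _ = p ^ (ε * a) := by rw [← rpow_natCast, ← rpow_mul hp0]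

lemma rpow_eq_prod_primeFactors {n : ℕ} (hn : n ≠ 0) (ε : ℝ) :
    (n : ℝ) ^ ε = ∏ p ∈ n.primeFactors, (p : ℝ) ^ (ε * n.factorization p) := by
  conv_lhs =>
    rw [← Nat.prod_factorization_pow_eq_self hn, Nat.prod_factorization_eq_prod_primeFactors]
  push_cast
  rw [← finsetProd_rpow _ _ fun p _ => by positivity]
  refine prod_congr rfl fun p _ => ?_
  rw [← rpow_natCast, ← rpow_mul (Nat.cast_nonneg p), mul_comm]

theorem Nat.card_divisors_le_mul_rpow {ε : ℝ} (hε : 0 < ε) :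
    ∃ C : ℝ, 0 ≤ C ∧ ∀ n : ℕ, n ≠ 0 → (#n.divisors : ℝ) ≤ C * n ^ ε := by
  set M : ℝ := 1 + (ε * Real.log 2)⁻¹
  have hM : 1 ≤ M := le_add_of_nonneg_right (by positivity)
  set N : ℕ := ⌈(2 : ℝ) ^ ε⁻¹⌉₊
  -- `(a + 1) / p ^ (ε * a)` is at most `M` for every prime `p`, and at most `1` once `p ≥ 2 ^ ε⁻¹`
  set w : ℕ → ℝ := fun p => if p < N then M else 1
  refine ⟨M ^ N, by positivity, fun n hn => ?_⟩
  have hlocal : ∀ p ∈ n.primeFactors, (n.factorization p + 1 : ℝ)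
      ≤ w p * (p : ℝ) ^ (ε * n.factorization p) := by
    intro p hp
    have hp2 : (2 : ℝ) ≤ p := by exact_mod_cast (Nat.prime_of_mem_primeFactors hp).two_le
    by_cases hpN : p < N
    · simp only [w, if_pos hpN]
      exact (add_one_le_mul_two_rpow hε _).trans (by gcongr)
    · simp only [w, if_neg hpN, one_mul]
      exact add_one_le_rpow_of_two_rpow_inv_le hε
        ((Nat.le_ceil _).trans (by exact_mod_cast not_lt.mp hpN)) _
  have hw : ∏ p ∈ n.primeFactors, w p ≤ M ^ N := by
    rw [prod_ite, prod_const, prod_const, one_pow, mul_one]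
    refine pow_le_pow_right₀ hM ((card_le_card fun p hp => ?_).trans (card_range N).le)
    exact mem_range.mpr (mem_filter.mp hp).2
  calc (#n.divisors : ℝ) = ∏ p ∈ n.primeFactors, (n.factorization p + 1 : ℝ) := by
        rw [Nat.card_divisors hn]; push_cast; rfl
    _ ≤ ∏ p ∈ n.primeFactors, w p * (p : ℝ) ^ (ε * n.factorization p) :=
        prod_le_prod (fun _ _ => by positivity) hlocal
    _ = (∏ p ∈ n.primeFactors, w p) * n ^ ε := by
        rw [prod_mul_distrib, rpow_eq_prod_primeFactors hn]
    _ ≤ M ^ N * n ^ ε := by gcongr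

lemma Nat.mul_right_mem_Icc_one_half_iff {q j g : ℕ} (hg : 0 < g) :
    j * g ∈ Icc 1 (q * g / 2) ↔ j ∈ Icc 1 (q / 2) := by
  simp only [mem_Icc, Nat.le_div_iff_mul_le two_pos]
  constructor <;> rintro ⟨h1, h2⟩ <;> exact ⟨by nlinarith, by nlinarith⟩

theorem Nat.sum_Icc_half_eq_sum_divisors {M : Type*} [AddCommMonoid M] {q : ℕ} (hq : q ≠ 0)
    (f : ℕ → ℕ → M) :
    ∑ j ∈ Icc 1 (q / 2), f (q / j.gcd q) (j / j.gcd q)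
      = ∑ t ∈ q.divisors with 1 < t, ∑ j ∈ Icc 1 (t / 2) with j.Coprime t, f t j := by
  rw [sum_sigma']
  refine sum_nbij' (fun j => ⟨q / j.gcd q, j / j.gcd q⟩) (fun p => q / p.1 * p.2) ?_ ?_ ?_ ?_
    (fun _ _ => rfl)
  · intro j hj
    obtain ⟨g, j', t, hg, hcop, rfl, rfl⟩ :=
      Nat.exists_coprime' (Nat.gcd_pos_of_pos_right j (Nat.pos_of_ne_zero hq))
    rw [Nat.mul_right_mem_Icc_one_half_iff hg, mem_Icc, Nat.le_div_iff_mul_le two_pos] at hj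
    simp only [mem_sigma, mem_filter, Nat.mem_divisors, Nat.gcd_mul_right, hcop.gcd_eq_one,
      one_mul, Nat.mul_div_cancel _ hg, mem_Icc, Nat.le_div_iff_mul_le two_pos]
    exact ⟨⟨⟨dvd_mul_right t g, hq⟩, by omega⟩, hj, hcop⟩
  · rintro ⟨t, j⟩ hp
    simp only [mem_sigma, mem_filter, Nat.mem_divisors] at hp
    obtain ⟨⟨⟨⟨s, rfl⟩, -⟩, -⟩, hj, -⟩ := hp
    have hs : 0 < s := Nat.pos_of_ne_zero (right_ne_zero_of_mul hq)
    rw [Nat.mul_div_cancel_left _ (Nat.pos_of_ne_zero (left_ne_zero_of_mul hq)), mul_comm s]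
    exact (Nat.mul_right_mem_Icc_one_half_iff hs).mpr hj
  · intro j _
    simp only [Nat.div_div_self (Nat.gcd_dvd_right j q) hq,
      Nat.mul_div_cancel' (Nat.gcd_dvd_left j q)]
  · rintro ⟨t, j⟩ hp
    simp only [mem_sigma, mem_filter, Nat.mem_divisors] at hp
    obtain ⟨⟨⟨⟨s, rfl⟩, -⟩, -⟩, -, hcop⟩ := hp
    have hs : 0 < s := Nat.pos_of_ne_zero (right_ne_zero_of_mul hq)
    have ht : 0 < t := Nat.pos_of_ne_zero (left_ne_zero_of_mul hq)
    rw [Nat.mul_div_cancel_left s ht, mul_comm t s, Nat.gcd_mul_left, hcop.gcd_eq_one, mul_one,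
      Nat.mul_div_cancel_left t hs, Nat.mul_div_cancel_left j hs]

theorem mul_sum_Icc_half_eq_sum_divisors {q : ℕ} (hq : q ≠ 0) (T : ℕ → ℝ) :
    (q : ℝ) * ∑ j ∈ Icc 1 (q / 2), 1 / (j : ℝ) * T (q / j.gcd q)
      = ∑ t ∈ q.divisors with 1 < t,
          (t : ℝ) * ∑ j ∈ Icc 1 (t / 2) with j.Coprime t, 1 / (j : ℝ) * T t := by
  simp_rw [mul_sum, ← mul_assoc, mul_one_div]
  rw [← Nat.sum_Icc_half_eq_sum_divisors hq fun t j => (t : ℝ) / j * T t]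
  refine sum_congr rfl fun j _ => ?_
  rw [Nat.cast_div_div_div_cancel_right (Nat.gcd_dvd_left j q) (Nat.gcd_dvd_right j q)]

lemma Int.natCast_dvd_mul_iff {q : ℕ} (hq : q ≠ 0) (j : ℕ) (a : ℤ) :
    (q : ℤ) ∣ j * a ↔ ((q / j.gcd q : ℕ) : ℤ) ∣ a := by
  obtain ⟨g, j', t, hg, hcop, rfl, rfl⟩ :=
    Nat.exists_coprime' (Nat.gcd_pos_of_pos_right j (Nat.pos_of_ne_zero hq))
  rw [Nat.gcd_mul_right, hcop.gcd_eq_one, one_mul, Nat.mul_div_cancel _ hg]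
  push_cast
  rw [mul_right_comm, mul_dvd_mul_iff_right (by positivity)]
  exact ⟨(Nat.isCoprime_iff_coprime.mpr hcop.symm).dvd_of_dvd_mul_left, (·.mul_left _)⟩

lemma abs_tsum_multiples_le {R ℓ t : ℕ} (hℓ : 0 < ℓ) (ht : 0 < t) {B : ℝ} {K : ℤ → ℝ}
    (hK0 : ∀ a : ℤ, (R : ℤ) < |a| → K a = 0) (hKb : ∀ a, |K a| ≤ B) :
    |∑' a : ℤ, if (t : ℤ) ∣ a then K (a * ℓ) else 0| ≤ (2 * (R / t : ℕ) + 1) * B := by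
  have hinj : Function.Injective (· * (t : ℤ)) := mul_left_injective₀ (by positivity)
  rw [← hinj.tsum_eq fun a ha => ?support]
  case support =>
    obtain ⟨c, rfl⟩ := (ite_ne_right_iff.mp ha).1
    exact ⟨c, mul_comm c t⟩
  simp only [dvd_mul_left, if_true]
  set m := R / t
  rw [tsum_eq_sum (s := Icc (-(m : ℤ)) m) fun c hc => hK0 _ ?large]
  case large =>
    have hc : (m : ℤ) + 1 ≤ |c| := by
      rw [mem_Icc, not_and_or, not_le, not_le] at hc
      rcases abs_cases c with ⟨h, _⟩ | ⟨h, _⟩ <;> omega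
    have hR : (R : ℤ) < (m + 1) * t := by exact_mod_cast (Nat.lt_div_mul_add ht).trans_eq (by ring)
    rw [abs_mul, abs_mul, Nat.abs_cast, Nat.abs_cast]
    calc (R : ℤ) < (m + 1) * t := hR
      _ ≤ |c| * t := by gcongr
      _ ≤ |c| * t * ℓ := le_mul_of_one_le_right (by positivity) (by exact_mod_cast hℓ)
  calc |∑ c ∈ Icc (-(m : ℤ)) m, K (c * t * ℓ)| ≤ ∑ c ∈ Icc (-(m : ℤ)) m, |K (c * t * ℓ)| :=
        abs_sum_le_sum_abs _ _
    _ ≤ #(Icc (-(m : ℤ)) m) • B := sum_le_card_nsmul _ _ _ fun c _ => hKb _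
    _ = (2 * m + 1) * B := by
        rw [Int.card_Icc, nsmul_eq_mul, show (m + 1 - -m : ℤ).toNat = 2 * m + 1 by omega]
        push_cast; ring

lemma sum_one_div_le_one_add_log {s : Finset ℕ} {n : ℕ} (hs : s ⊆ Icc 1 n) :
    ∑ j ∈ s, 1 / (j : ℝ) ≤ 1 + log n :=
  calc ∑ j ∈ s, 1 / (j : ℝ) ≤ ∑ j ∈ Icc 1 n, 1 / (j : ℝ) :=
        sum_le_sum_of_subset_of_nonneg hs fun _ _ _ => by positivity
    _ = harmonic n := by simp [harmonic_eq_sum_Icc]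
    _ ≤ 1 + log n := harmonic_le_one_add_log n

lemma one_add_log_le_mul_rpow {x δ : ℝ} (hx : 1 ≤ x) (hδ : 0 < δ) :
    1 + log x ≤ (1 + δ⁻¹) * x ^ δ := by
  have hlog : log x ≤ x ^ δ / δ := log_le_rpow_div (by linarith) hδ
  have hone : 1 ≤ x ^ δ := one_le_rpow hx hδ.le
  rw [div_eq_inv_mul] at hlog
  nlinarith

lemma abs_sum_divisors_le {q R ℓ : ℕ} (hq : q ≠ 0) (hℓ : 0 < ℓ) {B : ℝ} {K : ℤ → ℝ}
    (hK0 : ∀ a : ℤ, (R : ℤ) < |a| → K a = 0) (hKb : ∀ a, |K a| ≤ B) :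
    |∑ t ∈ q.divisors with 1 < t, (t : ℝ) * ∑ j ∈ Icc 1 (t / 2) with j.Coprime t,
        1 / (j : ℝ) * ∑' a : ℤ, (if (t : ℤ) ∣ a then K (a * ℓ) else 0)|
      ≤ #q.divisors * ((1 + log q) * ((2 * R + q) * B)) := by
  have hB : 0 ≤ B := (abs_nonneg _).trans (hKb 0)
  have hterm : ∀ t ∈ q.divisors, 1 < t →
      |(t : ℝ) * ∑ j ∈ Icc 1 (t / 2) with j.Coprime t,
        1 / (j : ℝ) * ∑' a : ℤ, (if (t : ℤ) ∣ a then K (a * ℓ) else 0)|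
      ≤ (1 + log q) * ((2 * R + q) * B) := by
    intro t ht ht1
    have htq : t ≤ q := Nat.divisor_le ht
    have hharm : ∑ j ∈ Icc 1 (t / 2) with j.Coprime t, 1 / (j : ℝ) ≤ 1 + log q :=
      sum_one_div_le_one_add_log fun j hj => by
        simp only [mem_filter, mem_Icc] at hj ⊢; omega
    have hmult : (t : ℝ) * |∑' a : ℤ, if (t : ℤ) ∣ a then K (a * ℓ) else 0| ≤ (2 * R + q) * B :=
      calc (t : ℝ) * |∑' a : ℤ, if (t : ℤ) ∣ a then K (a * ℓ) else 0|
          ≤ t * ((2 * (R / t : ℕ) + 1) * B) := by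
            gcongr; exact abs_tsum_multiples_le hℓ (by omega) hK0 hKb
        _ = (2 * (t * (R / t) : ℕ) + t) * B := by push_cast; ring
        _ ≤ (2 * R + q) * B := by gcongr; exact Nat.mul_div_le R t
    rw [← sum_mul, abs_mul, abs_mul, Nat.abs_cast, abs_of_nonneg (by positivity), mul_left_comm]
    gcongr
  calc _ ≤ ∑ t ∈ q.divisors with 1 < t, (1 + log q) * ((2 * R + q) * B) :=
        (abs_sum_le_sum_abs _ _).trans
          (sum_le_sum fun t ht => hterm t (mem_filter.mp ht).1 (mem_filter.mp ht).2)
    _ ≤ #q.divisors * ((1 + log q) * ((2 * R + q) * B)) := by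
        rw [sum_const, nsmul_eq_mul]
        have hlog : 0 ≤ log q := log_natCast_nonneg q
        gcongr
        exact filter_subset _ _

open Real in
theorem divisor_flip (ε : ℝ) (hε : 0 < ε) : ∃ C : ℝ, ∀ q h ℓ : ℕ,
    0 < q → 0 < h → 0 < ℓ → ∀ K : ℤ → ℝ,
    (∀ a : ℤ, K (-a) = K a) →
    (∀ a : ℤ, 2*(h:ℤ) < |a| → K a = 0) →
    (∀ a : ℤ, |K a| ≤ 2*h) →
    (2 * (q : ℝ) * ∑ j ∈ Finset.Icc 1 (q/2),
        (1 / (j : ℝ)) * ∑' a : ℤ, (if (q : ℤ) ∣ (j : ℤ) * a then K (a * ℓ) else 0))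
      = 2 * ∑ t ∈ q.divisors.filter (fun t => 1 < t),
          (t : ℝ) * ∑ j ∈ (Finset.Icc 1 (t/2)).filter (fun j => Nat.Coprime j t),
            (1 / (j : ℝ)) * ∑' a : ℤ, (if (t : ℤ) ∣ a then K (a * ℓ) else 0) ∧
    |2 * (q : ℝ) * ∑ j ∈ Finset.Icc 1 (q/2),
        (1 / (j : ℝ)) * ∑' a : ℤ, (if (q : ℤ) ∣ (j : ℤ) * a then K (a * ℓ) else 0)|
      ≤ C * ((q : ℝ) * h + (h : ℝ)^2) * (q : ℝ)^ε := by
  obtain ⟨C, hC0, hC⟩ := Nat.card_divisors_le_mul_rpow (half_pos hε)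
  refine ⟨16 * C * (1 + (ε / 2)⁻¹), fun q h ℓ hq _ hℓ K _ hK0 hKb => ?_⟩
  have hflip : 2 * (q : ℝ) * ∑ j ∈ Icc 1 (q / 2),
        1 / (j : ℝ) * ∑' a : ℤ, (if (q : ℤ) ∣ (j : ℤ) * a then K (a * ℓ) else 0)
      = 2 * ∑ t ∈ q.divisors with 1 < t, (t : ℝ) * ∑ j ∈ Icc 1 (t / 2) with j.Coprime t,
          1 / (j : ℝ) * ∑' a : ℤ, (if (t : ℤ) ∣ a then K (a * ℓ) else 0) := by
    simp_rw [Int.natCast_dvd_mul_iff hq.ne']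
    rw [mul_assoc, mul_sum_Icc_half_eq_sum_divisors hq.ne'
      fun t => ∑' a : ℤ, if (t : ℤ) ∣ a then K (a * ℓ) else 0]
  refine ⟨hflip, ?_⟩
  have hsum := abs_sum_divisors_le (R := 2 * h) hq.ne' hℓ (by exact_mod_cast hK0) hKb
  have hlog := one_add_log_le_mul_rpow (Nat.one_le_cast.mpr hq) (half_pos hε)
  have hlog0 : 0 ≤ log q := log_natCast_nonneg q
  have hsplit : (q : ℝ) ^ ε = q ^ (ε / 2) * q ^ (ε / 2) := by
    rw [← rpow_add (by positivity), add_halves]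
  rw [hflip, abs_mul, abs_two]
  calc 2 * |_| ≤ 2 * (#q.divisors * ((1 + log q) * ((2 * (2 * h : ℕ) + q) * (2 * h)))) := by
        gcongr
    _ ≤ 2 * (C * q ^ (ε / 2) *
          ((1 + (ε / 2)⁻¹) * q ^ (ε / 2) * ((2 * (2 * h) + q) * (2 * h)))) := by
        push_cast
        gcongr
        exact hC q hq.ne'
    _ = C * (1 + (ε / 2)⁻¹) * q ^ ε * (4 * (h * (4 * h + q))) := by rw [hsplit]; ring
    _ ≤ C * (1 + (ε / 2)⁻¹) * q ^ ε * (16 * (q * h + h ^ 2)) :=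
        mul_le_mul_of_nonneg_left (by nlinarith) (by positivity)
    _ = 16 * C * (1 + (ε / 2)⁻¹) * (q * h + h ^ 2) * q ^ ε := by ring
end
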